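/- arXiv:1601.03759 — 3 statements merged into one kernel-verified Lean document; each statement's English description precedes it below -/
import Mathlib

section
/- Let X : [0,∞) → ℝ be a continuous function and let r⁻¹ : [0,∞) → [0,∞) be nondecreasing and continuous with r⁻¹(t) = t − α·L(t) where L is a continuous nondecreasing function that increases only on the set {s : X(s) = 0} (meaning L(b) = L(a) whenever X(s) ≠ 0 for all s ∈ [a,b]). If ∫₀ᵗ 1_{X(s)=0} d r⁻¹(s) = 0 (Lebesgue–Stieltjes integral) for all t, then ∫₀ᵗ 1_{X(s)=0} ds = α·L(t) for all t ≥ 0. -/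
/-!
Write `G = α • L`. Since `F + G` is the identity, `dF + dG` is Lebesgue measure. The measure `dG`
is carried by the closed set `Z = {X = 0}`, because `L` is flat on every closed interval inside
the open set `Zᶜ`, while `dF` does not charge `Z ∩ (0, t]` by hypothesis. Hence the Lebesgue
measure of `Z ∩ (0, t]` is `dG (Z ∩ (0, t]) = dG (0, t] = α L t - α L 0 = α L t`.
-/

open MeasureTheory Set

namespace StieltjesFunction

def ofContinuous (f : ℝ → ℝ) (hf : Monotone f) (hc : Continuous f) : StieltjesFunction ℝ where
  toFun := f
  mono' := hf
  right_continuous' _ := hc.continuousWithinAt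

@[simp]
theorem ofContinuous_apply (f : ℝ → ℝ) (hf : Monotone f) (hc : Continuous f) (x : ℝ) :
    ofContinuous f hf hc x = f x :=
  rfl

theorem measure_isOpen_eq_zero_of_flat (f : StieltjesFunction ℝ) {U : Set ℝ} (hU : IsOpen U)
    (hf : ∀ a b, a ≤ b → Icc a b ⊆ U → f b = f a) : f.measure U = 0 := by
  refine measure_null_of_locally_null U fun x hx => ?_
  obtain ⟨ε, hε, hsub⟩ := (nhds_basis_Icc_pos x).mem_iff.1 (hU.mem_nhds hx)
  refine ⟨Ioc (x - ε) (x + ε), mem_nhdsWithin_of_mem_nhds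
    (Ioc_mem_nhds (by linarith) (by linarith)), ?_⟩
  rw [measure_Ioc, hf _ _ (by linarith) hsub, sub_self, ENNReal.ofReal_zero]

end StieltjesFunction

/-- Let `X` be continuous, `L` continuous nondecreasing with `L 0 = 0` that
increases only on `{s | X s = 0}`, `α > 0`, and let `F` be the Stieltjes function
`F t = t - α * L t` (assumed nondecreasing). If the Lebesgue–Stieltjes integral
`∫₀ᵗ 1_{X=0} dF = 0` for all `t ≥ 0`, then `∫₀ᵗ 1_{X=0}(s) ds = α * L t` for all `t ≥ 0`. -/
theorem stmt2 (α : ℝ) (hα : 0 < α) (X L : ℝ → ℝ)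
    (hX : Continuous X) (hLc : Continuous L) (hLm : Monotone L) (hL0 : L 0 = 0)
    (hLflat : ∀ a b : ℝ, a ≤ b → (∀ s ∈ Set.Icc a b, X s ≠ 0) → L b = L a)
    (F : StieltjesFunction ℝ) (hF : ∀ t, F t = t - α * L t)
    (hzero : ∀ t ∈ Set.Ici (0:ℝ),
      ∫ s in Set.Ioc (0:ℝ) t, Set.indicator {u | X u = 0} (fun _ => (1:ℝ)) s ∂F.measure = 0) :
    ∀ t ∈ Set.Ici (0:ℝ),
      ∫ s in Set.Ioc (0:ℝ) t, Set.indicator {u | X u = 0} (fun _ => (1:ℝ)) s = α * L t := by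
  intro t ht
  set Z := {u | X u = 0}
  have hZ : IsClosed Z := isClosed_singleton.preimage hX
  have hintegral (μ : Measure ℝ) :
      ∫ s in Ioc 0 t, Z.indicator (fun _ => (1:ℝ)) s ∂μ = μ.real (Z ∩ Ioc 0 t) := by
    rw [← measureReal_restrict_apply hZ.measurableSet]
    exact integral_indicator_one hZ.measurableSet
  let G := StieltjesFunction.ofContinuous (fun s => α * L s) (hLm.const_mul hα.le)
    (continuous_const.mul hLc)
  have hdecomp : F.measure + G.measure = volume := by
    rw [← StieltjesFunction.measure_add, Real.volume_eq_stieltjes_id]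
    congr 1
    ext s
    simp [G, hF]
  have hGZ : G.measure Zᶜ = 0 :=
    G.measure_isOpen_eq_zero_of_flat hZ.isOpen_compl fun a b hab hsub => by
      simp [G, hLflat a b hab hsub]
  have hFZ : F.measure (Z ∩ Ioc 0 t) = 0 := by
    rw [← measureReal_eq_zero_iff
      ((measure_mono inter_subset_right).trans_lt measure_Ioc_lt_top).ne, ← hintegral, hzero t ht]
  have hvol : volume (Z ∩ Ioc 0 t) = ENNReal.ofReal (α * L t) := by
    rw [← hdecomp, Measure.add_apply, hFZ, zero_add, inter_comm, measure_inter_conull hGZ,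
      StieltjesFunction.measure_Ioc]
    simp [G, hL0]
  rw [hintegral, measureReal_def, hvol, ENNReal.toReal_ofReal (mul_nonneg hα.le (hL0 ▸ hLm ht))]
end

section
/- For every t > 0 and α > 0, the function y ↦ (1/(α·√(2πy)))·exp(−(t−y)²/(2α²y)) on (0,∞) equals the derivative in y of the function y ↦ −Φ((t−y)/(α√y)) + exp(2t/α²)·Φ((t+y)/(α√y)), where Φ is the standard normal cumulative distribution function Φ(x) = (1/√(2π))·∫_{−∞}^{x} exp(−z²/2) dz. -/
open Real MeasureTheory

/-- The standard normal cumulative distribution function. -/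
noncomputable def gaussCDF (x : ℝ) : ℝ :=
  (Real.sqrt (2 * Real.pi))⁻¹ * ∫ z in Set.Iic x, Real.exp (-z ^ 2 / 2)

/-!
The two Gaussian densities that appear after differentiating the two terms agree once the
second is weighted by `exp (2t/α²)`, because `(t + y)² - (t - y)² = 4ty`. What remains are the
chain-rule factors `(t + y) / (2αy√y)` and `(y - t) / (2αy√y)`, which add up to `1 / (α√y)`.
-/

theorem hasDerivAt_integral_Iic {E : Type*} [NormedAddCommGroup E] [NormedSpace ℝ E]
    [CompleteSpace E] {f : ℝ → E} (hf : Integrable f) (hcont : Continuous f) (x : ℝ) :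
    HasDerivAt (fun u => ∫ z in Set.Iic u, f z) (f x) x := by
  have hsplit : (fun u => ∫ z in Set.Iic u, f z) =
      fun u => (∫ z in Set.Iic 0, f z) + ∫ z in (0 : ℝ)..u, f z := by
    funext u
    rw [← intervalIntegral.integral_Iic_sub_Iic hf.integrableOn hf.integrableOn]
    abel
  rw [hsplit]
  exact (intervalIntegral.integral_hasDerivAt_right hf.intervalIntegrable
    hcont.aestronglyMeasurable.stronglyMeasurableAtFilter hcont.continuousAt).const_add _

theorem integrable_exp_neg_sq_div_two : Integrable fun z : ℝ => exp (-z ^ 2 / 2) := by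
  convert integrable_exp_neg_mul_sq (by norm_num : (0 : ℝ) < 1 / 2) using 3 with z
  ring

theorem hasDerivAt_gaussCDF (x : ℝ) :
    HasDerivAt gaussCDF ((√(2 * π))⁻¹ * exp (-x ^ 2 / 2)) x :=
  (hasDerivAt_integral_Iic integrable_exp_neg_sq_div_two (by fun_prop) x).const_mul _

theorem HasDerivAt.div_mul_sqrt {f : ℝ → ℝ} {f' y : ℝ} (hf : HasDerivAt f f' y) {α : ℝ}
    (hα : α ≠ 0) (hy : 0 < y) :
    HasDerivAt (fun y => f y / (α * √y)) ((2 * y * f' - f y) / (2 * α * y * √y)) y := by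
  refine (hf.div ((hasDerivAt_sqrt hy.ne').const_mul α) (by positivity)).congr_deriv ?_
  field_simp
  rw [sq_sqrt hy.le]
  ring

theorem div_mul_sqrt_sq (a α : ℝ) {y : ℝ} (hy : 0 ≤ y) :
    (a / (α * √y)) ^ 2 = a ^ 2 / (α ^ 2 * y) := by
  rw [div_pow, mul_pow, sq_sqrt hy]

theorem exp_mul_exp_neg_sq_add_div_two (t : ℝ) {α y : ℝ} (hα : α ≠ 0) (hy : 0 < y) :
    exp (2 * t / α ^ 2) * exp (-((t + y) / (α * √y)) ^ 2 / 2) =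
      exp (-((t - y) / (α * √y)) ^ 2 / 2) := by
  rw [← exp_add, div_mul_sqrt_sq _ _ hy.le, div_mul_sqrt_sq _ _ hy.le]
  congr 1
  field_simp
  ring

theorem stmt4_general (t α : ℝ) (hα : 0 < α) (y : ℝ) (hy : 0 < y) :
    HasDerivAt
      (fun y : ℝ =>
        -gaussCDF ((t - y) / (α * Real.sqrt y))
          + Real.exp (2 * t / α ^ 2) * gaussCDF ((t + y) / (α * Real.sqrt y)))
      (1 / (α * Real.sqrt (2 * Real.pi * y)) * Real.exp (-(t - y) ^ 2 / (2 * α ^ 2 * y)))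
      y := by
  have hminus := (hasDerivAt_gaussCDF _).comp y
    (((hasDerivAt_id' y).const_sub t).div_mul_sqrt hα.ne' hy)
  have hplus := (hasDerivAt_gaussCDF _).comp y
    (((hasDerivAt_id' y).const_add t).div_mul_sqrt hα.ne' hy)
  refine (hminus.neg.add (hplus.const_mul (exp (2 * t / α ^ 2)))).congr_deriv ?_
  have hexp : -(t - y) ^ 2 / (2 * α ^ 2 * y) = -((t - y) / (α * √y)) ^ 2 / 2 := by
    rw [div_mul_sqrt_sq _ _ hy.le]
    ring
  rw [hexp, sqrt_mul (by positivity : (0 : ℝ) ≤ 2 * π)]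
  have hweight := exp_mul_exp_neg_sq_add_div_two t hα.ne' hy
  -- with `exp (-u²/2)` replaced by the weighted second density, only rational algebra remains
  generalize exp (-((t - y) / (α * √y)) ^ 2 / 2) = φ at hweight ⊢
  subst hweight
  field_simp
  ring

/-- For `t > 0`, `α > 0` and `y > 0`, the function
`y ↦ -Φ((t-y)/(α√y)) + exp(2t/α²) Φ((t+y)/(α√y))` has derivative
`(1/(α √(2πy))) exp(-(t-y)²/(2α²y))` at `y`. -/
theorem stmt4 (t α : ℝ) (ht : 0 < t) (hα : 0 < α) (y : ℝ) (hy : 0 < y) :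
    HasDerivAt
      (fun y : ℝ =>
        -gaussCDF ((t - y) / (α * Real.sqrt y))
          + Real.exp (2 * t / α ^ 2) * gaussCDF ((t + y) / (α * Real.sqrt y)))
      (1 / (α * Real.sqrt (2 * Real.pi * y)) * Real.exp (-(t - y) ^ 2 / (2 * α ^ 2 * y)))
      y :=
  stmt4_general t α hα y hy
end

section
/- Let Y : [0,∞) → ℝ be a continuous function and let ρ : [0,∞) → [0,∞) be continuous, nondecreasing, and surjective, such that Y is constant on every interval on which ρ is constant. Define X(t) = Y(ρ⁻¹(t)) where ρ⁻¹(t) = inf{s : ρ(s) > t} is the right-continuous generalized inverse. Then X is right-continuous; if moreover ρ is strictly increasing, then ρ⁻¹ is continuous and X is continuous. -/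
/-!
The right inverse `ρ⁻¹(t) = inf {s ≥ 0 | t < ρ s}` is monotone, and it is right-continuous
because each `s` with `t < ρ s` stays admissible for all `u` in the neighbourhood `[t, ρ s)`
of `t`. When `ρ` is strictly increasing on `[0,∞)`, every `b < ρ⁻¹(t)` has `ρ b ≤ t`, so for
`a < b` all `u > ρ a` satisfy `a ≤ ρ⁻¹(u)`: this gives left-continuity.
`X = Y ∘ ρ⁻¹` inherits both properties.
-/

open Filter Set

noncomputable def rightGenInv (f : ℝ → ℝ) (t : ℝ) : ℝ := sInf {s | 0 ≤ s ∧ t < f s}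

section RightGenInv

variable {f : ℝ → ℝ}

lemma nonempty_setOf_lt_of_tendsto (hf : Tendsto f atTop atTop) (t : ℝ) :
    {s | 0 ≤ s ∧ t < f s}.Nonempty :=
  ((eventually_ge_atTop 0).and (hf.eventually_gt_atTop t)).exists

lemma rightGenInv_nonneg (t : ℝ) : 0 ≤ rightGenInv f t :=
  Real.sInf_nonneg fun _ hs => hs.1

lemma rightGenInv_le {t s : ℝ} (hs : 0 ≤ s) (ht : t < f s) : rightGenInv f t ≤ s :=
  csInf_le ⟨0, fun _ hr => hr.1⟩ ⟨hs, ht⟩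

lemma apply_le_of_lt_rightGenInv {t s : ℝ} (hs : 0 ≤ s) (h : s < rightGenInv f t) : f s ≤ t :=
  not_lt.1 fun ht => (rightGenInv_le hs ht).not_gt h

lemma le_rightGenInv (hf : Tendsto f atTop atTop) {t a : ℝ}
    (h : ∀ s, 0 ≤ s → t < f s → a ≤ s) : a ≤ rightGenInv f t :=
  le_csInf (nonempty_setOf_lt_of_tendsto hf t) fun s hs => h s hs.1 hs.2

lemma exists_lt_apply_of_rightGenInv_lt (hf : Tendsto f atTop atTop) {t r : ℝ}
    (h : rightGenInv f t < r) : ∃ s, 0 ≤ s ∧ t < f s ∧ s < r := by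
  obtain ⟨s, ⟨hs, hts⟩, hsr⟩ := exists_lt_of_csInf_lt (nonempty_setOf_lt_of_tendsto hf t) h
  exact ⟨s, hs, hts, hsr⟩

lemma monotone_rightGenInv (hf : Tendsto f atTop atTop) : Monotone (rightGenInv f) :=
  fun _ _ hab => le_rightGenInv hf fun _ hs hbs => rightGenInv_le hs (hab.trans_lt hbs)

lemma continuousWithinAt_Ici_rightGenInv (hf : Tendsto f atTop atTop) (t : ℝ) :
    ContinuousWithinAt (rightGenInv f) (Ici t) t := by
  refine tendsto_order.2 ⟨fun a ha => ?_, fun b hb => ?_⟩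
  · filter_upwards [self_mem_nhdsWithin] with u (hu : t ≤ u)
    exact ha.trans_le (monotone_rightGenInv hf hu)
  · obtain ⟨s, hs, hts, hsb⟩ := exists_lt_apply_of_rightGenInv_lt hf hb
    filter_upwards [Ico_mem_nhdsGE hts] with u hu
    exact (rightGenInv_le hs hu.2).trans_lt hsb

lemma continuousWithinAt_Iic_rightGenInv (hf : Tendsto f atTop atTop)
    (hstrict : StrictMonoOn f (Ici 0)) (t : ℝ) :
    ContinuousWithinAt (rightGenInv f) (Iic t) t := by
  refine tendsto_order.2 ⟨fun a ha => ?_, fun b hb => ?_⟩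
  · rcases lt_or_ge a 0 with ha0 | ha0
    · exact Eventually.of_forall fun u => ha0.trans_le (rightGenInv_nonneg u)
    obtain ⟨c, hac, hct⟩ := exists_between ha
    obtain ⟨b, hcb, hbt⟩ := exists_between hct
    have hc0 : 0 ≤ c := ha0.trans hac.le
    have hb0 : 0 ≤ b := hc0.trans hcb.le
    have hfc : f c < t := (hstrict hc0 hb0 hcb).trans_le (apply_le_of_lt_rightGenInv hb0 hbt)
    filter_upwards [Ioc_mem_nhdsLE hfc] with u hu
    refine hac.trans_le (le_rightGenInv hf fun s hs hus => ?_)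
    by_contra! hsc
    exact (hu.1.trans hus).not_ge (hstrict.monotoneOn hs hc0 hsc.le)
  · filter_upwards [self_mem_nhdsWithin] with u (hu : u ≤ t)
    exact (monotone_rightGenInv hf hu).trans_lt hb

lemma continuous_rightGenInv (hf : Tendsto f atTop atTop) (hstrict : StrictMonoOn f (Ici 0)) :
    Continuous (rightGenInv f) :=
  continuous_iff_continuousAt.2 fun t => continuousAt_iff_continuous_left_right.2
    ⟨continuousWithinAt_Iic_rightGenInv hf hstrict t, continuousWithinAt_Ici_rightGenInv hf t⟩

end RightGenInv

theorem stmt16_general (Y ρ : ℝ → ℝ) (hY : Continuous Y)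
    (hρtop : Tendsto ρ atTop atTop)
    (ρinv : ℝ → ℝ) (hρinv : ∀ t : ℝ, ρinv t = sInf {s : ℝ | 0 ≤ s ∧ t < ρ s}) :
    (∀ t : ℝ, 0 ≤ t → ContinuousWithinAt (fun u => Y (ρinv u)) (Set.Ici t) t) ∧
    (StrictMonoOn ρ (Set.Ici 0) →
      ContinuousOn ρinv (Set.Ici 0) ∧ ContinuousOn (fun u => Y (ρinv u)) (Set.Ici 0)) := by
  obtain rfl : ρinv = rightGenInv ρ := funext hρinv
  refine ⟨fun t _ => hY.continuousAt.comp_continuousWithinAt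
    (continuousWithinAt_Ici_rightGenInv hρtop t), fun hstrict => ?_⟩
  have hcont := continuous_rightGenInv hρtop hstrict
  exact ⟨hcont.continuousOn, (hY.comp hcont).continuousOn⟩

/-- Let `Y` be continuous and `ρ : [0,∞) → [0,∞)` continuous,
nondecreasing, with `ρ 0 = 0` and `ρ(t) → ∞`, such that `Y` is constant on intervals of
constancy of `ρ`. With `ρ⁻¹(t) = inf {s ≥ 0 | t < ρ s}` the right generalized inverse and
`X = Y ∘ ρ⁻¹`, `X` is right-continuous on `[0,∞)`; if moreover `ρ` is strictly increasing
on `[0,∞)`, then `ρ⁻¹` and `X` are continuous on `[0,∞)`. -/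
theorem stmt16 (Y ρ : ℝ → ℝ) (hY : Continuous Y)
    (hρc : Continuous ρ) (hρm : Monotone ρ) (hρ0 : ρ 0 = 0)
    (hρtop : Tendsto ρ atTop atTop)
    (hsync : ∀ a b : ℝ, 0 ≤ a → a ≤ b → ρ a = ρ b → Y a = Y b)
    (ρinv : ℝ → ℝ) (hρinv : ∀ t : ℝ, ρinv t = sInf {s : ℝ | 0 ≤ s ∧ t < ρ s}) :
    (∀ t : ℝ, 0 ≤ t → ContinuousWithinAt (fun u => Y (ρinv u)) (Set.Ici t) t) ∧
    (StrictMonoOn ρ (Set.Ici 0) →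
      ContinuousOn ρinv (Set.Ici 0) ∧ ContinuousOn (fun u => Y (ρinv u)) (Set.Ici 0)) :=
  stmt16_general Y ρ hY hρtop ρinv hρinv
end
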